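/- arXiv:1711.00448 — 2 statements merged into one kernel-verified Lean document; each statement's English description precedes it below -/
import Mathlib

section
/- Let Ω ⊂ ℝ² be open, bounded and strictly convex with C¹ boundary, and let x₀ ∈ ℝ² \ cl(Ω). Then Γ(x₀) := { x ∈ ∂Ω : ⟨x − x₀, n(x)⟩ > 0 } is a connected subset of ∂Ω. -/
/-!
Write `K` for the closure of `Ω`. Every `x ∈ ∂Ω` maximises `⟪·, n x⟫` on `K`, so by strict
convexity the Gauss map `n` is injective on `∂Ω`. Since `∂Ω` is homeomorphic to the circle, `n` is
(up to that homeomorphism) a continuous injective self-map of the circle, hence surjective, so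
`n : ∂Ω → S¹` is a homeomorphism. Again because `x` maximises `⟪·, n x⟫` on `K`, `x ∈ Γ(x₀)` iff
`⟪y - x₀, n x⟫ > 0` for some `y ∈ K`: `Γ(x₀)` is the preimage under `n` of a union of open
half-circles `{u | 0 < ⟪y - x₀, u⟫}`, `y ∈ K`. All of them contain the direction of a hyperplane
separating `x₀` from `K`, so their union is connected.
-/

open Set Metric Function Module Topology Filter
open scoped RealInnerProductSpace

theorem Function.not_injective_of_isPreconnected_compl_singleton {X α : Type*}
    [TopologicalSpace X] [PreconnectedSpace X] [LinearOrder α] [DenselyOrdered α]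
    [TopologicalSpace α] [OrderClosedTopology α]
    (hX : ∀ x : X, IsPreconnected ({x}ᶜ : Set X)) {a b : X} (hab : a ≠ b)
    {g : X → α} (hg : Continuous g) : ¬ Injective g := by
  intro hinj
  wlog hlt : g a < g b generalizing a b
  · exact this hab.symm ((hinj.ne hab).lt_or_gt.resolve_left hlt)
  obtain ⟨m, ham, hmb⟩ := exists_between hlt
  obtain ⟨c, hc⟩ := intermediate_value_univ a b hg ⟨ham.le, hmb.le⟩
  have hac : a ≠ c := by rintro rfl; exact ham.ne hc
  have hbc : b ≠ c := by rintro rfl; exact hmb.ne' hc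
  obtain ⟨d, hdc, hd⟩ := (hX c).intermediate_value hac hbc hg.continuousOn ⟨ham.le, hmb.le⟩
  exact hdc (hinj (hd.trans hc.symm))

variable {E : Type*} [NormedAddCommGroup E] [InnerProductSpace ℝ E]

theorem isPreconnected_sphere_compl_singleton (v : sphere (0 : E) 1) :
    IsPreconnected ({v}ᶜ : Set (sphere (0 : E) 1)) := by
  have hv := norm_eq_of_mem_sphere v
  rw [← range_stereographic_symm hv v.2]
  exact isPreconnected_range (isOpenEmbedding_stereographic_symm hv).continuous

theorem Continuous.surjective_of_injective_of_finrank_eq_two (hE : finrank ℝ E = 2)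
    {f : sphere (0 : E) 1 → sphere (0 : E) 1} (hf : Continuous f) (hinj : Injective f) :
    Surjective f := by
  have : Fact (finrank ℝ E = 1 + 1) := ⟨hE⟩
  have : FiniteDimensional ℝ E := Module.finite_of_finrank_eq_succ hE
  have : PreconnectedSpace (sphere (0 : E) 1) := by
    refine Subtype.preconnectedSpace (isConnected_sphere ?_ 0 zero_le_one).isPreconnected
    rw [← finrank_eq_rank, hE]; norm_num
  intro q
  by_contra! hq
  -- in the stereographic chart at the missed point `q`, `f` injects the circle into `ℝ`
  let φ := stereographic' 1 q
  have hsrc : ∀ x, f x ∈ φ.source := fun x ↦ by simpa [φ] using hq x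
  refine not_injective_of_isPreconnected_compl_singleton isPreconnected_sphere_compl_singleton
    (ne_neg_of_mem_unit_sphere ℝ q) (g := fun x ↦ φ (f x) 0) ?_ ?_
  · exact (EuclideanSpace.proj 0).continuous.comp (φ.continuousOn.comp_continuous hf hsrc)
  · intro x y hxy
    refine hinj (φ.injOn (hsrc x) (hsrc y) ?_)
    ext i
    rwa [Subsingleton.elim i 0]

theorem isConnected_sphere_inter_inner_pos {w : E} (hw : w ≠ 0) :
    IsConnected (sphere (0 : E) 1 ∩ {u | 0 < ⟪w, u⟫}) := by
  have hhalf : IsConnected {z : E | 0 < ⟪w, z⟫} :=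
    ⟨⟨w, real_inner_self_pos.2 hw⟩, (convex_halfSpace_gt (innerₛₗ ℝ w).isLinear 0).isPreconnected⟩
  convert hhalf.image (fun z ↦ ‖z‖⁻¹ • z) ?_ using 1
  · refine Subset.antisymm (fun u ⟨hu, hwu⟩ ↦ ⟨u, hwu, ?_⟩) ?_
    · simp [mem_sphere_zero_iff_norm.1 hu]
    · rintro _ ⟨z, hz, rfl⟩
      have hz0 : z ≠ 0 := by rintro rfl; simp at hz
      refine ⟨by simp [norm_smul, hz0], ?_⟩
      simp only [mem_ofPred_eq, real_inner_smul_right]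
      exact mul_pos (by positivity) hz
  · refine ContinuousOn.smul (ContinuousOn.inv₀ continuous_norm.continuousOn ?_) continuousOn_id
    rintro z hz h0
    simp [norm_eq_zero.1 h0] at hz

theorem isConnected_sphere_inter_exists_inner_sub_pos {K : Set E} {x₀ e : E} (hK : K.Nonempty)
    (he : ∀ y ∈ K, 0 < ⟪y - x₀, e⟫) :
    IsConnected (sphere (0 : E) 1 ∩ {u | ∃ y ∈ K, 0 < ⟪y - x₀, u⟫}) := by
  obtain ⟨y₀, hy₀⟩ := hK
  have he0 : e ≠ 0 := by rintro rfl; simpa using he y₀ hy₀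
  have hu₀ : ‖e‖⁻¹ • e ∈ sphere (0 : E) 1 := by simp [norm_smul, he0]
  have hpos : ∀ y ∈ K, 0 < ⟪y - x₀, ‖e‖⁻¹ • e⟫ := fun y hy ↦ by
    rw [real_inner_smul_right]; exact mul_pos (by positivity) (he y hy)
  refine ⟨⟨_, hu₀, y₀, hy₀, hpos y₀ hy₀⟩, isPreconnected_of_forall (‖e‖⁻¹ • e) ?_⟩
  rintro u ⟨hu, y, hy, hyu⟩
  have hw : y - x₀ ≠ 0 := by rintro h; simpa [h] using he y hy
  exact ⟨sphere 0 1 ∩ {u | 0 < ⟪y - x₀, u⟫}, fun v hv ↦ ⟨hv.1, y, hy, hv.2⟩,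
    ⟨hu₀, hpos y hy⟩, ⟨hu, hyu⟩, (isConnected_sphere_inter_inner_pos hw).isPreconnected⟩

theorem exists_forall_inner_sub_pos [CompleteSpace E] {K : Set E} (hKc : Convex ℝ K)
    (hKcl : IsClosed K) {x₀ : E} (hx₀ : x₀ ∉ K) : ∃ e : E, ∀ y ∈ K, 0 < ⟪y - x₀, e⟫ := by
  obtain ⟨f, u, hfx₀, hfK⟩ := geometric_hahn_banach_point_closed hKc hKcl hx₀
  refine ⟨(InnerProductSpace.toDual ℝ E).symm f, fun y hy ↦ ?_⟩
  rw [real_inner_comm, InnerProductSpace.toDual_symm_apply, map_sub]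
  linarith [hfK y hy]

theorem inner_sub_neg_of_mem_interior {S : Set E} {x v : E} (hv : v ≠ 0)
    (hS : ∀ y ∈ S, ⟪y - x, v⟫ ≤ 0) {y : E} (hy : y ∈ interior S) : ⟪y - x, v⟫ < 0 := by
  have hline : Tendsto (fun t : ℝ ↦ y + t • v) (𝓝[>] 0) (𝓝 y) :=
    ((continuous_const.add (continuous_id.smul continuous_const)).tendsto' 0 y
      (by simp)).mono_left nhdsWithin_le_nhds
  obtain ⟨t, hts, ht⟩ :=
    ((hline.eventually (mem_interior_iff_mem_nhds.1 hy)).and self_mem_nhdsWithin).exists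
  have := hS _ hts
  rw [show y + t • v - x = (y - x) + t • v by abel, inner_add_left, real_inner_smul_left] at this
  nlinarith [real_inner_self_pos.2 hv, ht]

theorem inner_sub_pos_iff_exists_of_forall_inner_sub_nonpos {S : Set E} {x x₀ v : E}
    (hx : x ∈ S) (hS : ∀ y ∈ S, ⟪y - x, v⟫ ≤ 0) :
    0 < ⟪x - x₀, v⟫ ↔ ∃ y ∈ S, 0 < ⟪y - x₀, v⟫ := by
  refine ⟨fun h ↦ ⟨x, hx, h⟩, fun ⟨y, hy, hyv⟩ ↦ ?_⟩
  have := hS y hy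
  rw [show y - x₀ = (y - x) + (x - x₀) by abel, inner_add_left] at hyv
  linarith

theorem interior_closure_eq_of_forall_inner_sub_nonpos {Ω : Set E} {n : E → E}
    (hn : ∀ x ∈ frontier Ω, n x ≠ 0)
    (hsupp : ∀ x ∈ frontier Ω, ∀ y ∈ closure Ω, ⟪y - x, n x⟫ ≤ 0) (hΩ : IsOpen Ω) :
    interior (closure Ω) = Ω := by
  refine Subset.antisymm (fun x hx ↦ ?_) (interior_maximal subset_closure hΩ)
  by_contra hxΩ
  have hxF : x ∈ frontier Ω := ⟨interior_subset hx, by rwa [hΩ.interior_eq]⟩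
  simpa using inner_sub_neg_of_mem_interior (hn x hxF) (hsupp x hxF) hx

theorem injOn_of_strictConvex_closure {Ω : Set E} {n : E → E} (hn : ∀ x ∈ frontier Ω, n x ≠ 0)
    (hsupp : ∀ x ∈ frontier Ω, ∀ y ∈ closure Ω, ⟪y - x, n x⟫ ≤ 0)
    (hconv : StrictConvex ℝ (closure Ω)) :
    InjOn n (frontier Ω) := by
  intro x hx y hy hxy
  by_contra hne
  have hmid := hconv (frontier_subset_closure hx) (frontier_subset_closure hy) hne
    one_half_pos one_half_pos (add_halves 1)
  have hlt := inner_sub_neg_of_mem_interior (hn x hx) (hsupp x hx) hmid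
  have hle := hsupp y hy x (frontier_subset_closure hx)
  rw [show (1 / 2 : ℝ) • x + (1 / 2 : ℝ) • y - x = (1 / 2 : ℝ) • -(x - y) by module,
    real_inner_smul_left, inner_neg_left, hxy] at hlt
  linarith

theorem exists_homeomorph_frontier_sphere_of_injOn (hE : finrank ℝ E = 2) {Ω : Set E}
    (hconv : Convex ℝ Ω) (hint : (interior Ω).Nonempty) (hbdd : Bornology.IsBounded Ω)
    {n : E → E} (hcont : ContinuousOn n (frontier Ω)) (hunit : ∀ x ∈ frontier Ω, ‖n x‖ = 1)
    (hinj : InjOn n (frontier Ω)) :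
    ∃ N : frontier Ω ≃ₜ sphere (0 : E) 1, ∀ x, (N x : E) = n x := by
  have : FiniteDimensional ℝ E := Module.finite_of_finrank_eq_succ hE
  obtain ⟨h, -, -, hF⟩ :=
    exists_homeomorph_image_interior_closure_frontier_eq_unitBall hconv hint hbdd
  let φ : frontier Ω ≃ₜ sphere (0 : E) 1 := (h.image _).trans (Homeomorph.setCongr hF)
  have : CompactSpace (frontier Ω) := φ.symm.compactSpace
  let ν : frontier Ω → sphere (0 : E) 1 := fun x ↦ ⟨n x, by simpa using hunit x x.2⟩
  have hν : Continuous ν := hcont.domRestrict.subtype_mk _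
  have hνinj : Injective ν := fun x y h ↦ Subtype.ext (hinj x.2 y.2 (congrArg Subtype.val h))
  have hνsurj : Surjective ν :=
    ((hν.comp φ.symm.continuous).surjective_of_injective_of_finrank_eq_two hE
      (hνinj.comp φ.symm.injective)).of_comp
  exact ⟨hν.homeoOfEquivCompactToT2 (f := Equiv.ofBijective ν ⟨hνinj, hνsurj⟩), fun _ ↦ rfl⟩

theorem Homeomorph.isConnected_image_val_preimage {X Y : Type*} [TopologicalSpace X]
    [TopologicalSpace Y] {s : Set X} {t : Set Y} (N : s ≃ₜ t) {A : Set Y}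
    (hA : IsConnected (t ∩ A)) : IsConnected (Subtype.val '' (N ⁻¹' (Subtype.val ⁻¹' A))) := by
  rw [← Subtype.image_preimage_coe] at hA
  have hA' : IsConnected (Subtype.val ⁻¹' A : Set t) :=
    ⟨hA.nonempty.of_image, Topology.IsInducing.subtypeVal.isPreconnected_image.1 hA.2⟩
  exact (N.isConnected_preimage.2 hA').image _ continuous_subtype_val.continuousOn

theorem illuminated_region_connected_general
    (Ω : Set (EuclideanSpace ℝ (Fin 2)))
    (hopen : IsOpen Ω) (hbdd : Bornology.IsBounded Ω) (hne : Ω.Nonempty)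
    (hconv : StrictConvex ℝ (closure Ω))
    (n : EuclideanSpace ℝ (Fin 2) → EuclideanSpace ℝ (Fin 2))
    (hn_cont : ContinuousOn n (frontier Ω))
    (hn_unit : ∀ x ∈ frontier Ω, ‖n x‖ = 1)
    (hn_support : ∀ x ∈ frontier Ω, ∀ y ∈ closure Ω, ⟪y - x, n x⟫ ≤ 0)
    (x₀ : EuclideanSpace ℝ (Fin 2)) (hx₀ : x₀ ∉ closure Ω) :
    IsConnected {x ∈ frontier Ω | 0 < ⟪x - x₀, n x⟫} := by
  have hn_ne : ∀ x ∈ frontier Ω, n x ≠ 0 := fun x hx ↦ by simp [← norm_ne_zero_iff, hn_unit x hx]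
  have hint := interior_closure_eq_of_forall_inner_sub_nonpos hn_ne hn_support hopen
  obtain ⟨N, hN⟩ := exists_homeomorph_frontier_sphere_of_injOn finrank_euclideanSpace_fin
    (hint ▸ hconv.convex.interior) (by rwa [hopen.interior_eq]) hbdd hn_cont hn_unit
    (injOn_of_strictConvex_closure hn_ne hn_support hconv)
  obtain ⟨e, he⟩ := exists_forall_inner_sub_pos hconv.convex isClosed_closure hx₀
  have hΓ : {x ∈ frontier Ω | 0 < ⟪x - x₀, n x⟫} =
      Subtype.val '' (N ⁻¹' (Subtype.val ⁻¹' {u | ∃ y ∈ closure Ω, 0 < ⟪y - x₀, u⟫})) := by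
    ext x
    simp only [mem_image, mem_preimage, Subtype.exists, exists_and_right, exists_eq_right, hN,
      mem_ofPred_eq, exists_prop]
    exact and_congr_right fun hx ↦ inner_sub_pos_iff_exists_of_forall_inner_sub_nonpos
      (frontier_subset_closure hx) (hn_support x hx)
  rw [hΓ]
  exact N.isConnected_image_val_preimage
    (isConnected_sphere_inter_exists_inner_sub_pos (hne.mono subset_closure) he)

/-- Let `Ω ⊂ ℝ²` be open, bounded and strictly convex with `C¹` boundary, with
outward unit normal `n`, and `x₀ ∉ cl Ω`.  Then
`Γ(x₀) = {x ∈ ∂Ω : ⟪x - x₀, n x⟫ > 0}` is a connected subset of `∂Ω`. -/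
theorem illuminated_region_connected
    (Ω : Set (EuclideanSpace ℝ (Fin 2)))
    (hopen : IsOpen Ω) (hbdd : Bornology.IsBounded Ω) (hne : Ω.Nonempty)
    (hconv : StrictConvex ℝ (closure Ω))
    (n : EuclideanSpace ℝ (Fin 2) → EuclideanSpace ℝ (Fin 2))
    (hn_cont : ContinuousOn n (frontier Ω))
    (hn_unit : ∀ x ∈ frontier Ω, ‖n x‖ = 1)
    (hn_support : ∀ x ∈ frontier Ω, ∀ y ∈ closure Ω, ⟪y - x, n x⟫ ≤ 0)
    (hn_strict : ∀ x ∈ frontier Ω, ∀ y ∈ Ω, ⟪y - x, n x⟫ < 0)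
    (x₀ : EuclideanSpace ℝ (Fin 2)) (hx₀ : x₀ ∉ closure Ω) :
    IsConnected {x ∈ frontier Ω | 0 < ⟪x - x₀, n x⟫} :=
  illuminated_region_connected_general Ω hopen hbdd hne hconv n hn_cont hn_unit hn_support x₀ hx₀
end

section
/- Let D = { x ∈ ℝ² : |x| < 1 } be the unit disc and Γ ⊂ ∂D a connected open arc. Then Γ satisfies the property 'every billiard trajectory in D meets Γ' (i.e. observes all chords under iterated reflection) if and only if the arclength of Γ is strictly greater than π; equivalently, iff Γ = Γ(x₀) ∩ ∂D for some x₀ outside the closed disc (up to larger arcs). -/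
open Real Set
open scoped RealInnerProductSpace

/-- An arithmetic progression with positive step `ψ` smaller than `b - a`
hits some translate `(a + 2πk, b + 2πk)`. -/
lemma ap_hits (a b θ ψ : ℝ) (hψ : 0 < ψ) (h : ψ < b - a) :
    ∃ n : ℕ, ∃ k : ℤ, θ + n * ψ ∈ Set.Ioo (a + 2 * π * k) (b + 2 * π * k) := by
  obtain ⟨k, hk⟩ : ∃ k : ℤ, θ - a ≤ 2 * π * k := by
    obtain ⟨k, hk⟩ := exists_int_gt ((θ - a) / (2 * π))
    refine ⟨k, ?_⟩
    rw [div_lt_iff₀ (by positivity : (0:ℝ) < 2 * π)] at hk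
    linarith
  set c : ℝ := (a + 2 * π * k - θ) / ψ with hc
  have hc0 : 0 ≤ c := div_nonneg (by linarith) hψ.le
  have hfl0 : 0 ≤ ⌊c⌋ := Int.floor_nonneg.mpr hc0
  refine ⟨(⌊c⌋ + 1).toNat, k, ?_, ?_⟩
  · have h1 : c < ⌊c⌋ + 1 := Int.lt_floor_add_one c
    have h1' : a + 2 * π * k - θ < (⌊c⌋ + 1) * ψ := by
      rw [hc, div_lt_iff₀ hψ] at h1
      push_cast at h1 ⊢; linarith
    have hcast : (((⌊c⌋ + 1).toNat : ℕ) : ℝ) = (⌊c⌋ : ℝ) + 1 := by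
      rw [← Int.cast_natCast, Int.toNat_of_nonneg (by omega)]
      push_cast; ring
    rw [hcast]; linarith
  · have h2 : (⌊c⌋ : ℝ) ≤ c := Int.floor_le c
    have h2' : (⌊c⌋ : ℝ) * ψ ≤ a + 2 * π * k - θ := by
      rw [hc, le_div_iff₀ hψ] at h2
      linarith
    have hcast : (((⌊c⌋ + 1).toNat : ℕ) : ℝ) = (⌊c⌋ : ℝ) + 1 := by
      rw [← Int.cast_natCast, Int.toNat_of_nonneg (by omega)]
      push_cast; ring
    rw [hcast]; nlinarith

/-- Billiard observability in the unit disc: every billiard trajectory is the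
sequence of boundary points at angles `θ₀ + n·φ` (constant angular step
`φ ∈ (0, 2π)`).  A connected open boundary arc `Γ`, of angles `(α, β)` with
`0 < β - α ≤ 2π`, meets every billiard trajectory of the disc if and only if
its arclength `β - α` is strictly greater than `π` — i.e. iff it is at least an
illuminated region `Γ(x₀)` seen from a point `x₀` outside the closed disc. -/
theorem disc_arc_observes_all_billiard_trajectories_iff (α β : ℝ)
    (hαβ : 0 < β - α) (hαβ' : β - α ≤ 2 * π) :
    (∀ θ₀ : ℝ, ∀ φ ∈ Set.Ioo (0 : ℝ) (2 * π),
        ∃ n : ℕ, ∃ k : ℤ, θ₀ + n * φ ∈ Set.Ioo (α + 2 * π * k) (β + 2 * π * k))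
      ↔ π < β - α := by
  constructor
  · intro h
    by_contra hle
    push_neg at hle
    obtain ⟨n, k, h1, h2⟩ := h α π ⟨Real.pi_pos, by linarith [Real.pi_pos]⟩
    have hπ := Real.pi_pos
    have hk1 : (2 * k : ℝ) < n := by
      have : π * (2 * k) < π * n := by push_cast; nlinarith
      exact by nlinarith
    have hk2 : (n : ℝ) < 2 * k + 1 := by
      have : π * n < π * (2 * k + 1) := by push_cast; nlinarith
      exact by nlinarith
    have hk1' : 2 * k < (n : ℤ) := by exact_mod_cast hk1
    have hk2' : (n : ℤ) < 2 * k + 1 := by exact_mod_cast hk2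
    omega
  · intro h θ₀ φ ⟨hφ0, hφ2⟩
    rcases le_or_gt φ π with hφπ | hφπ
    · exact ap_hits α β θ₀ φ hφ0 (by linarith)
    · obtain ⟨n, k, h1, h2⟩ := ap_hits (-β) (-α) (-θ₀) (2 * π - φ)
        (by linarith) (by linarith)
      refine ⟨n, (n : ℤ) - k, ?_, ?_⟩ <;> push_cast <;> nlinarith
end
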